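/- arXiv:2302.10926 — 3 statements merged into one kernel-verified Lean document; each statement's English description precedes it below -/
import Mathlib

section
/- If G is a finite simple graph with minimum degree δ(G) ≥ 1 and with no full edge, then EC(G) ≥ 1 + δ(G). -/
/-!
Let `v` be a vertex of minimum degree and `u` a neighbour of `v`. The edges avoiding both `u`
and `v` do not dominate `uv`, so they extend to a maximal non-dominating edge set `P`. Since no
single edge dominates, maximality makes every other edge a coalition partner of `P`, so `P`
together with the singletons of the remaining edges is an ec-partition. If an edge `ux` is not
dominated by `P` and an edge `vy` at `v`, then comparing the degrees of `x` and `v` shows that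
`x` has a neighbour outside `{u, v}`, a contradiction; hence `P` plus any edge at `v` dominates,
`P` contains no edge at `v`, and the partition has at least `1 + deg v` parts.
-/

open SimpleGraph

/-- Two edges (as unordered pairs of vertices) share an endpoint. -/
def SharesEndpoint {V : Type*} (e f : Sym2 V) : Prop := ∃ v, v ∈ e ∧ v ∈ f

/-- `D` is an edge dominating set of `G`: `D` consists of edges of `G` and every
edge of `G` outside `D` shares an endpoint with some edge of `D`. -/
def IsEdgeDominating {V : Type*} (G : SimpleGraph V) (D : Set (Sym2 V)) : Prop :=
  D ⊆ G.edgeSet ∧ ∀ e ∈ G.edgeSet \ D, ∃ f ∈ D, SharesEndpoint e f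

/-- Two disjoint edge sets form an edge coalition: neither is an edge dominating
set but their union is. -/
def IsEdgeCoalition {V : Type*} (G : SimpleGraph V) (E₁ E₂ : Set (Sym2 V)) : Prop :=
  Disjoint E₁ E₂ ∧ ¬ IsEdgeDominating G E₁ ∧ ¬ IsEdgeDominating G E₂ ∧
    IsEdgeDominating G (E₁ ∪ E₂)

/-- An ec-partition of `G`: a partition of the edge set of `G` (into nonempty,
pairwise disjoint parts) such that every part either is a singleton edge
dominating set, or is not an edge dominating set but forms an edge coalition
with another part. -/
def IsECPartition {V : Type*} (G : SimpleGraph V) (P : Set (Set (Sym2 V))) : Prop :=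
  (∀ A ∈ P, A.Nonempty) ∧
  P.Pairwise Disjoint ∧
  ⋃₀ P = G.edgeSet ∧
  ∀ A ∈ P, ((∃ e, A = {e}) ∧ IsEdgeDominating G A) ∨
    (¬ IsEdgeDominating G A ∧ ∃ B ∈ P, B ≠ A ∧ IsEdgeCoalition G A B)

/-- The edge coalition number `EC(G)`: the maximum number of parts over all
ec-partitions of `G`. -/
noncomputable def edgeCoalitionNumber {V : Type*} (G : SimpleGraph V) : ℕ :=
  sSup {k | ∃ P, IsECPartition G P ∧ P.ncard = k}

theorem SharesEndpoint.symm {V : Type*} {e f : Sym2 V} (h : SharesEndpoint e f) :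
    SharesEndpoint f e :=
  let ⟨v, he, hf⟩ := h; ⟨v, hf, he⟩

namespace SimpleGraph

variable {V : Type*} {G : SimpleGraph V}

theorem isEdgeDominating_edgeSet (G : SimpleGraph V) : IsEdgeDominating G G.edgeSet :=
  ⟨subset_rfl, fun _ he => absurd he.1 he.2⟩

theorem IsEdgeDominating.mono {D D' : Set (Sym2 V)} (hD : IsEdgeDominating G D) (hDD' : D ⊆ D')
    (hD' : D' ⊆ G.edgeSet) : IsEdgeDominating G D' := by
  refine ⟨hD', fun e he => ?_⟩
  obtain ⟨f, hf, hef⟩ := hD.2 e ⟨he.1, fun h => he.2 (hDD' h)⟩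
  exact ⟨f, hDD' hf, hef⟩

theorem isEdgeDominating_singleton_iff {e : Sym2 V} :
    IsEdgeDominating G {e} ↔
      e ∈ G.edgeSet ∧ ∀ f ∈ G.edgeSet, f ≠ e → SharesEndpoint e f := by
  simp only [IsEdgeDominating, Set.singleton_subset_iff, Set.mem_sdiff, Set.mem_singleton_iff,
    exists_eq_left, and_imp]
  exact and_congr_right fun _ => forall₂_congr fun f _ => imp_congr_right fun _ =>
    ⟨SharesEndpoint.symm, SharesEndpoint.symm⟩

theorem IsEdgeCoalition.symm {A B : Set (Sym2 V)} (h : IsEdgeCoalition G A B) :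
    IsEdgeCoalition G B A :=
  ⟨h.1.symm, h.2.2.1, h.2.1, Set.union_comm A B ▸ h.2.2.2⟩

theorem isECPartition_of_maximal {P : Set (Sym2 V)}
    (hsingle : ∀ e ∈ G.edgeSet, ¬ IsEdgeDominating G {e})
    (hP : Maximal (fun D => D ⊆ G.edgeSet ∧ ¬ IsEdgeDominating G D) P) :
    IsECPartition G (insert P ((fun e => {e}) '' (G.edgeSet \ P))) := by
  obtain ⟨⟨hPE, hPnd⟩, hPmax⟩ := hP
  have hins (e) (he : e ∈ G.edgeSet \ P) : IsEdgeDominating G (insert e P) := by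
    by_contra h
    exact he.2 <|
      hPmax ⟨Set.insert_subset he.1 hPE, h⟩ (Set.subset_insert e P) (Set.mem_insert e P)
  have hcoal (e) (he : e ∈ G.edgeSet \ P) : IsEdgeCoalition G {e} P :=
    ⟨Set.disjoint_singleton_left.2 he.2, hsingle e he.1, hPnd, hins e he⟩
  have hsingleton_ne (e) (he : e ∉ P) : {e} ≠ P := fun h => he (h ▸ rfl)
  obtain ⟨e₀, he₀⟩ : (G.edgeSet \ P).Nonempty :=
    Set.sdiff_nonempty.2 fun h => hPnd ((isEdgeDominating_edgeSet G).mono h hPE)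
  refine ⟨?_, ?_, ?_, ?_⟩
  · rintro A (rfl | ⟨e, -, rfl⟩)
    · refine Set.nonempty_iff_ne_empty.2 fun h => hsingle e₀ he₀.1 ?_
      simpa [h] using hins e₀ he₀
    · exact Set.singleton_nonempty e
  · rintro _ (rfl | ⟨e, he, rfl⟩) _ (rfl | ⟨f, hf, rfl⟩) hAB
    · exact absurd rfl hAB
    · exact Set.disjoint_singleton_right.2 hf.2
    · exact Set.disjoint_singleton_left.2 he.2
    · exact Set.disjoint_singleton.2 fun h => hAB (h ▸ rfl)
  · rw [Set.sUnion_insert, Set.sUnion_image, Set.biUnion_of_singleton,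
      Set.union_sdiff_cancel hPE]
  · rintro A (rfl | ⟨e, he, rfl⟩)
    · exact .inr ⟨hPnd, {e₀}, Set.mem_insert_of_mem _ ⟨e₀, he₀, rfl⟩,
        hsingleton_ne e₀ he₀.2, (hcoal e₀ he₀).symm⟩
    · exact .inr ⟨hsingle e he.1, P, Set.mem_insert P _, (hsingleton_ne e he.2).symm,
        hcoal e he⟩

theorem add_one_le_edgeCoalitionNumber_of_maximal [Finite V] {P : Set (Sym2 V)}
    (hsingle : ∀ e ∈ G.edgeSet, ¬ IsEdgeDominating G {e})
    (hP : Maximal (fun D => D ⊆ G.edgeSet ∧ ¬ IsEdgeDominating G D) P) :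
    (G.edgeSet \ P).ncard + 1 ≤ edgeCoalitionNumber G := by
  have hbdd : BddAbove {k | ∃ Q, IsECPartition G Q ∧ Q.ncard = k} :=
    ⟨Nat.card (Set (Sym2 V)), by rintro _ ⟨Q, -, rfl⟩; exact Set.ncard_le_card Q⟩
  have hPnotMem : P ∉ (fun e => {e}) '' (G.edgeSet \ P) := fun ⟨e, he, h⟩ => he.2 (h ▸ rfl)
  calc (G.edgeSet \ P).ncard + 1
      = (insert P ((fun e => {e}) '' (G.edgeSet \ P))).ncard := by
        rw [Set.ncard_insert_of_notMem hPnotMem,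
          Set.ncard_image_of_injective _ Set.singleton_injective]
    _ ≤ edgeCoalitionNumber G := le_csSup hbdd ⟨_, isECPartition_of_maximal hsingle hP, rfl⟩

theorem exists_adj_notMem_of_card_lt_degree {x : V} [Fintype (G.neighborSet x)] (s : Finset V)
    (h : s.card < G.degree x) : ∃ z, G.Adj x z ∧ z ∉ s := by
  rw [← card_neighborFinset_eq_degree] at h
  obtain ⟨z, hz, hzs⟩ := Finset.exists_mem_notMem_of_card_lt_card h
  exact ⟨z, (G.mem_neighborFinset x z).1 hz, hzs⟩

theorem exists_adj_ne_ne_of_degree_le {u v x y : V} [Fintype (G.neighborSet v)]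
    [Fintype (G.neighborSet x)] (hvu : G.Adj v u) (hvy : G.Adj v y) (hxu : x ≠ u) (hyu : y ≠ u)
    (hyx : y ≠ x) (hdeg : G.degree v ≤ G.degree x) :
    ∃ z, G.Adj x z ∧ z ≠ v ∧ z ≠ u := by
  classical
  by_cases hvx : G.Adj v x
  · have hcard : ({v, u} : Finset V).card < G.degree x :=
      calc ({v, u} : Finset V).card ≤ 2 := Finset.card_le_two
        _ < ({u, y, x} : Finset V).card := by
          rw [Finset.card_eq_three.2 ⟨u, y, x, hyu.symm, hxu.symm, hyx, rfl⟩]; norm_num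
        _ ≤ G.degree v := by
          rw [← card_neighborFinset_eq_degree]
          exact Finset.card_le_card (by simp [Finset.insert_subset_iff, hvu, hvy, hvx])
        _ ≤ G.degree x := hdeg
    obtain ⟨z, hxz, hz⟩ := G.exists_adj_notMem_of_card_lt_degree _ hcard
    simp only [Finset.mem_insert, Finset.mem_singleton, not_or] at hz
    exact ⟨z, hxz, hz⟩
  · have hcard : ({u} : Finset V).card < G.degree x :=
      calc ({u} : Finset V).card < ({u, y} : Finset V).card := by
            rw [Finset.card_pair hyu.symm]; norm_num
        _ ≤ G.degree v := by
          rw [← card_neighborFinset_eq_degree]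
          exact Finset.card_le_card (by simp [Finset.insert_subset_iff, hvu, hvy])
        _ ≤ G.degree x := hdeg
    obtain ⟨z, hxz, hz⟩ := G.exists_adj_notMem_of_card_lt_degree _ hcard
    exact ⟨z, hxz, fun h => hvx (h ▸ hxz).symm, by simpa using hz⟩

theorem not_isEdgeDominating_edges_avoiding {u v : V} (hvu : G.Adj v u) :
    ¬ IsEdgeDominating G {f ∈ G.edgeSet | v ∉ f ∧ u ∉ f} := by
  rintro ⟨-, hdom⟩
  obtain ⟨f, hf, w, hw, hwf⟩ := hdom s(v, u) ⟨hvu, fun h => h.2.1 (Sym2.mem_mk_left v u)⟩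
  rcases Sym2.mem_iff.1 hw with rfl | rfl
  exacts [hf.2.1 hwf, hf.2.2 hwf]

theorem isEdgeDominating_insert_edges_avoiding [G.LocallyFinite] {u v : V} {e : Sym2 V}
    (hvu : G.Adj v u) (hmin : ∀ w, G.degree v ≤ G.degree w) (he : e ∈ G.incidenceSet v) :
    IsEdgeDominating G (insert e {f ∈ G.edgeSet | v ∉ f ∧ u ∉ f}) := by
  refine ⟨Set.insert_subset he.1 fun f hf => hf.1, ?_⟩
  rintro f ⟨hfE, hf⟩
  by_cases hvf : v ∈ f
  · exact ⟨e, Set.mem_insert e _, v, hvf, he.2⟩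
  have huf : u ∈ f := by_contra fun huf => hf (Set.mem_insert_of_mem _ ⟨hfE, hvf, huf⟩)
  obtain ⟨x, rfl⟩ := Sym2.mem_iff_exists.1 huf
  obtain ⟨y, rfl⟩ := Sym2.mem_iff_exists.1 he.2
  by_cases hy : y = u ∨ y = x
  · refine ⟨s(v, y), Set.mem_insert _ _, y, ?_, Sym2.mem_mk_right v y⟩
    rcases hy with rfl | rfl <;> simp
  simp only [not_or] at hy
  have hxu : x ≠ u := (G.ne_of_adj hfE).symm
  have hxv : x ≠ v := fun h => hvf (h ▸ Sym2.mem_mk_right u x)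
  obtain ⟨z, hxz, hzv, hzu⟩ :=
    G.exists_adj_ne_ne_of_degree_le hvu he.1 hxu hy.1 hy.2 (hmin x)
  refine ⟨s(x, z), Set.mem_insert_of_mem _ ⟨hxz, ?_, ?_⟩, x, Sym2.mem_mk_right u x,
    Sym2.mem_mk_left x z⟩ <;> simp [*, Ne.symm]

theorem ncard_incidenceSet_eq_degree (v : V) [Fintype (G.neighborSet v)] :
    (G.incidenceSet v).ncard = G.degree v := by
  classical
  rw [← Nat.card_coe_set_eq, Nat.card_congr (G.incidenceSetEquivNeighborSet v),
    Nat.card_eq_fintype_card, card_neighborSet_eq_degree]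

end SimpleGraph

/-- If `G` is a finite simple graph with minimum degree `δ(G) ≥ 1` and no full
edge, then `EC(G) ≥ 1 + δ(G)`. -/
theorem edgeCoalitionNumber_ge_minDegree {V : Type*} [Fintype V] (G : SimpleGraph V)
    [DecidableRel G.Adj] (hδ : 1 ≤ G.minDegree)
    (hfull : ¬ ∃ e ∈ G.edgeSet, ∀ f ∈ G.edgeSet, f ≠ e → SharesEndpoint e f) :
    1 + G.minDegree ≤ edgeCoalitionNumber G := by
  have hsingle : ∀ e ∈ G.edgeSet, ¬ IsEdgeDominating G {e} := fun e he hdom =>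
    hfull ⟨e, he, (isEdgeDominating_singleton_iff.1 hdom).2⟩
  have : Nonempty V := not_isEmpty_iff.1 fun _ => by simp at hδ
  obtain ⟨v, hv⟩ := G.exists_minimal_degree_vertex
  obtain ⟨u, hvu⟩ := (G.degree_pos_iff_exists_adj v).1 (hv ▸ hδ)
  obtain ⟨P, hP₀P, hP⟩ := Finite.exists_le_maximal
    (p := fun D => D ⊆ G.edgeSet ∧ ¬ IsEdgeDominating G D)
    ⟨fun f hf => hf.1, not_isEdgeDominating_edges_avoiding hvu⟩
  have hstar : G.incidenceSet v ⊆ G.edgeSet \ P := fun e he => ⟨he.1, fun heP => hP.1.2 <|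
    (isEdgeDominating_insert_edges_avoiding hvu (fun w => hv ▸ G.minDegree_le_degree w) he).mono
      (Set.insert_subset heP hP₀P) hP.1.1⟩
  calc 1 + G.minDegree = (G.incidenceSet v).ncard + 1 := by
        rw [ncard_incidenceSet_eq_degree, hv, add_comm]
    _ ≤ (G.edgeSet \ P).ncard + 1 := by gcongr; exact Set.toFinite _
    _ ≤ edgeCoalitionNumber G := add_one_le_edgeCoalitionNumber_of_maximal hsingle hP
end

section
/- For every n ≥ 3, EC(C_n) = n if and only if 3 ≤ n ≤ 6; that is, for the cycle C_n the singleton partition of the edge set is of maximum order among ec-partitions exactly when n ≤ 6, and EC(C_n) < n for all n ≥ 7. -/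
open SimpleGraph

/-!
In a graph of maximum degree `2` an edge shares an endpoint with at most three edges (itself
included), so an edge dominating set of `C_n` has at least `n / 3` edges. An ec-partition has at
most `|E|` parts, with equality only if every part is a single edge; then some part dominates alone
or together with one partner, which forces `n ≤ 6`. Conversely, for `n ≤ 6` the partition into
single edges is an ec-partition: for `n = 3` every edge dominates, and for `4 ≤ n ≤ 6` every edge
forms a coalition with the antipodal edge.
-/

namespace Set

variable {α : Type*} {P : Set (Set α)}

lemma sUnion_setOf_mem_and_mem_eq (hP : P.Pairwise Disjoint) {A : Set α} (hA : A ∈ P) {x : α}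
    (hx : x ∈ A) : ⋃₀ {B ∈ P | x ∈ B} = A := by
  refine Subset.antisymm ?_ (subset_sUnion_of_mem ⟨hA, hx⟩)
  rintro y ⟨B, ⟨hB, hxB⟩, hyB⟩
  obtain rfl : B = A := by
    by_contra hBA
    exact disjoint_left.mp (hP hB hA hBA) hxB hx
  exact hyB

-- A part is recovered from any of its points, so `P` is covered by an image of `S`.
lemma ncard_le_ncard_of_forall_inter_nonempty {S : Set α} (hP : P.Pairwise Disjoint)
    (hS : S.Finite) (h : ∀ A ∈ P, (A ∩ S).Nonempty) : P.ncard ≤ S.ncard := by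
  have hsub : P ⊆ (fun x => ⋃₀ {B ∈ P | x ∈ B}) '' S := fun A hA => by
    obtain ⟨x, hxA, hxS⟩ := h A hA
    exact ⟨x, hxS, sUnion_setOf_mem_and_mem_eq hP hA hxA⟩
  exact (ncard_le_ncard hsub (hS.image _)).trans (ncard_image_le hS)

lemma ncard_le_ncard_sUnion (hne : ∀ A ∈ P, A.Nonempty) (hP : P.Pairwise Disjoint)
    (hfin : (⋃₀ P).Finite) : P.ncard ≤ (⋃₀ P).ncard :=
  ncard_le_ncard_of_forall_inter_nonempty hP hfin fun A hA =>
    let ⟨x, hx⟩ := hne A hA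
    ⟨x, hx, subset_sUnion_of_mem hA hx⟩

lemma subsingleton_of_ncard_sUnion_le (hne : ∀ A ∈ P, A.Nonempty) (hP : P.Pairwise Disjoint)
    (hfin : (⋃₀ P).Finite) (h : (⋃₀ P).ncard ≤ P.ncard) {A : Set α} (hA : A ∈ P) :
    A.Subsingleton := by
  intro x hx y hy
  by_contra hxy
  have hy' : y ∈ ⋃₀ P := subset_sUnion_of_mem hA hy
  have hle : P.ncard ≤ (⋃₀ P \ {y}).ncard := by
    refine ncard_le_ncard_of_forall_inter_nonempty hP hfin.sdiff fun B hB => ?_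
    by_cases hBA : B = A
    · exact ⟨x, hBA ▸ hx, subset_sUnion_of_mem hA hx, hxy⟩
    · obtain ⟨z, hz⟩ := hne B hB
      refine ⟨z, hz, subset_sUnion_of_mem hB hz, ?_⟩
      rintro rfl
      exact disjoint_left.mp (hP hB hA hBA) hz hy
  rw [ncard_sdiff_singleton_of_mem hy'] at hle
  have hpos : 0 < (⋃₀ P).ncard := (ncard_pos hfin).mpr ⟨y, hy'⟩
  omega

end Set

open Set

section EdgeCoalition

variable {V : Type*} {G : SimpleGraph V} {P : Set (Set (Sym2 V))}

lemma IsECPartition.ncard_le (hP : IsECPartition G P) (hE : G.edgeSet.Finite) :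
    P.ncard ≤ G.edgeSet.ncard := by
  obtain ⟨hne, hdisj, hunion, -⟩ := hP
  rw [← hunion] at hE ⊢
  exact ncard_le_ncard_sUnion hne hdisj hE

lemma IsECPartition.subsingleton_of_ncard_edgeSet_le (hP : IsECPartition G P)
    (hE : G.edgeSet.Finite) (h : G.edgeSet.ncard ≤ P.ncard) {A : Set (Sym2 V)} (hA : A ∈ P) :
    A.Subsingleton := by
  obtain ⟨hne, hdisj, hunion, -⟩ := hP
  rw [← hunion] at hE h
  exact subsingleton_of_ncard_sUnion_le hne hdisj hE h hA

lemma edgeCoalitionNumber_le (hE : G.edgeSet.Finite) :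
    edgeCoalitionNumber G ≤ G.edgeSet.ncard :=
  csSup_le' <| by
    rintro _ ⟨P, hP, rfl⟩
    exact hP.ncard_le hE

lemma isEdgeCoalition_singleton_singleton (hG : ∀ e, ¬ IsEdgeDominating G {e}) {e f : Sym2 V}
    (h : IsEdgeDominating G {e, f}) : IsEdgeCoalition G {e} {f} := by
  refine ⟨disjoint_singleton.mpr fun hef => hG f ?_, hG e, hG f, by rwa [singleton_union]⟩
  rwa [hef, pair_eq_singleton] at h

lemma isECPartition_singletons
    (h : ∀ e ∈ G.edgeSet, IsEdgeDominating G {e} ∨ ∃ f, IsEdgeCoalition G {e} {f}) :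
    IsECPartition G ((fun e => {e}) '' G.edgeSet) := by
  refine ⟨?_, ?_, by simp [sUnion_image], ?_⟩
  · rintro _ ⟨e, -, rfl⟩
    exact singleton_nonempty e
  · rintro _ ⟨e, -, rfl⟩ _ ⟨f, -, rfl⟩ hef
    exact disjoint_singleton.mpr fun h => hef (h ▸ rfl)
  · rintro _ ⟨e, he, rfl⟩
    rcases h e he with hdom | ⟨f, hf⟩
    · exact Or.inl ⟨⟨e, rfl⟩, hdom⟩
    · refine Or.inr ⟨hf.2.1, {f}, ⟨f, hf.2.2.2.1 (Or.inr rfl), rfl⟩, fun hfe => ?_, hf⟩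
      exact disjoint_singleton.mp hf.1 (singleton_eq_singleton_iff.mp hfe).symm

lemma edgeCoalitionNumber_eq_ncard_edgeSet (hE : G.edgeSet.Finite)
    (hP : IsECPartition G ((fun e => {e}) '' G.edgeSet)) :
    edgeCoalitionNumber G = G.edgeSet.ncard := by
  refine (edgeCoalitionNumber_le hE).antisymm (le_csSup ⟨G.edgeSet.ncard, ?_⟩ ⟨_, hP, ?_⟩)
  · rintro _ ⟨Q, hQ, rfl⟩
    exact hQ.ncard_le hE
  · exact ncard_image_of_injective _ singleton_injective

-- In an ec-partition with `|E|` parts every part is a single edge, and any part dominates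
-- by itself or together with a coalition partner.
lemma IsECPartition.exists_isEdgeDominating_ncard_le_two (hP : IsECPartition G P)
    (hE : G.edgeSet.Finite) (h : G.edgeSet.ncard ≤ P.ncard) {A : Set (Sym2 V)} (hA : A ∈ P) :
    ∃ D, IsEdgeDominating G D ∧ D.ncard ≤ 2 := by
  have hle : ∀ B ∈ P, B.ncard ≤ 1 := fun B hB => by
    have hB := hP.subsingleton_of_ncard_edgeSet_le hE h hB
    have := hB.finite.to_subtype
    exact ncard_le_one_iff_subsingleton.mpr hB
  rcases hP.2.2.2 A hA with ⟨-, hdom⟩ | ⟨-, B, hB, -, hAB⟩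
  · exact ⟨A, hdom, (hle A hA).trans one_le_two⟩
  · exact ⟨A ∪ B, hAB.2.2.2, (ncard_union_le A B).trans (add_le_add (hle A hA) (hle B hB))⟩

lemma edgeCoalitionNumber_lt_ncard_edgeSet (hE : G.edgeSet.Finite)
    (h : ∀ D, IsEdgeDominating G D → 2 < D.ncard) : edgeCoalitionNumber G < G.edgeSet.ncard := by
  have hpos : 2 < G.edgeSet.ncard := h _ ⟨subset_rfl, fun e he => absurd he.1 he.2⟩
  suffices edgeCoalitionNumber G ≤ G.edgeSet.ncard - 1 by omega
  refine csSup_le' ?_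
  rintro _ ⟨P, hP, rfl⟩
  have hle := hP.ncard_le hE
  suffices P.ncard ≠ G.edgeSet.ncard by omega
  intro hcard
  obtain ⟨A, hA⟩ : P.Nonempty := nonempty_of_ncard_ne_zero (by omega)
  obtain ⟨D, hD, hD2⟩ := hP.exists_isEdgeDominating_ncard_le_two hE hcard.ge hA
  exact (h D hD).not_ge hD2

end EdgeCoalition

section Degree

variable {V : Type*} {G : SimpleGraph V}

lemma sharesEndpoint_mk_right_iff {e : Sym2 V} {u v : V} :
    SharesEndpoint e s(u, v) ↔ u ∈ e ∨ v ∈ e := by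
  simp only [SharesEndpoint, Sym2.mem_iff]
  grind

lemma IsEdgeDominating.edgeSet_subset_biUnion {D : Set (Sym2 V)} (hD : IsEdgeDominating G D) :
    G.edgeSet ⊆ ⋃ f ∈ D, {e ∈ G.edgeSet | SharesEndpoint e f} := by
  intro e he
  by_cases heD : e ∈ D
  · exact mem_biUnion heD ⟨he, e.out.1, Sym2.out_fst_mem e, Sym2.out_fst_mem e⟩
  · obtain ⟨f, hf, hef⟩ := hD.2 e ⟨he, heD⟩
    exact mem_biUnion hf ⟨he, hef⟩

lemma ncard_incidenceSet (v : V) [Fintype (G.neighborSet v)] :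
    (G.incidenceSet v).ncard = G.degree v := by
  classical
  rw [← Nat.card_coe_set_eq, Nat.card_congr (G.incidenceSetEquivNeighborSet v),
    Nat.card_eq_fintype_card, card_neighborSet_eq_degree]

lemma ncard_incidenceSet_union_add_one {u v : V} [Fintype (G.neighborSet u)]
    [Fintype (G.neighborSet v)] (h : G.Adj u v) :
    (G.incidenceSet u ∪ G.incidenceSet v).ncard + 1 = G.degree u + G.degree v := by
  classical
  have := Finite.of_equiv _ (G.incidenceSetEquivNeighborSet u).symm
  have := Finite.of_equiv _ (G.incidenceSetEquivNeighborSet v).symm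
  rw [← ncard_incidenceSet, ← ncard_incidenceSet,
    ← ncard_union_add_ncard_inter (G.incidenceSet u) (G.incidenceSet v),
    G.incidenceSet_inter_incidenceSet_of_adj h, ncard_singleton]

-- The edges meeting `s(u, v)` are those at `u` or at `v`, and `s(u, v)` itself is counted twice.
lemma ncard_setOf_sharesEndpoint_le [G.LocallyFinite] {d : ℕ} (hdeg : ∀ v, G.degree v ≤ d)
    {f : Sym2 V} (hf : f ∈ G.edgeSet) :
    {e ∈ G.edgeSet | SharesEndpoint e f}.ncard ≤ 2 * d - 1 := by
  induction f using Sym2.ind with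
  | h u v =>
    classical
    have hsub : {e ∈ G.edgeSet | SharesEndpoint e s(u, v)} ⊆
        G.incidenceSet u ∪ G.incidenceSet v := by
      rintro e ⟨he, hshare⟩
      rcases sharesEndpoint_mk_right_iff.mp hshare with hu | hv
      exacts [Or.inl ⟨he, hu⟩, Or.inr ⟨he, hv⟩]
    have := Finite.of_equiv _ (G.incidenceSetEquivNeighborSet u).symm
    have := Finite.of_equiv _ (G.incidenceSetEquivNeighborSet v).symm
    have hunion := ncard_incidenceSet_union_add_one (G.mem_edgeSet.mp hf)
    have hle := ncard_le_ncard hsub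
    have := hdeg u
    have := hdeg v
    omega

lemma IsEdgeDominating.ncard_edgeSet_le [Fintype V] [DecidableRel G.Adj] {d : ℕ}
    (hdeg : ∀ v, G.degree v ≤ d) {D : Set (Sym2 V)} (hD : IsEdgeDominating G D) :
    G.edgeSet.ncard ≤ (2 * d - 1) * D.ncard := by
  classical
  calc G.edgeSet.ncard
      ≤ (⋃ f ∈ D.toFinset, {e ∈ G.edgeSet | SharesEndpoint e f}).ncard :=
        ncard_le_ncard (by simpa using hD.edgeSet_subset_biUnion)
    _ ≤ ∑ f ∈ D.toFinset, {e ∈ G.edgeSet | SharesEndpoint e f}.ncard :=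
        Finset.set_ncard_biUnion_le _ _
    _ ≤ ∑ _f ∈ D.toFinset, (2 * d - 1) :=
        Finset.sum_le_sum fun f hf => ncard_setOf_sharesEndpoint_le hdeg (hD.1 (by simpa using hf))
    _ = (2 * d - 1) * D.ncard := by
        rw [Finset.sum_const, smul_eq_mul, ncard_eq_toFinset_card', mul_comm]

end Degree

lemma ncard_edgeSet_cycleGraph {n : ℕ} (hn : 3 ≤ n) : (cycleGraph n).edgeSet.ncard = n := by
  obtain ⟨m, rfl⟩ := Nat.exists_eq_add_of_le' hn
  have h := (cycleGraph (m + 3)).sum_degrees_eq_twice_card_edges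
  simp only [cycleGraph_degree_three_le, Finset.sum_const, Finset.card_univ, Fintype.card_fin,
    smul_eq_mul] at h
  rw [← coe_edgeFinset, ncard_coe_finset]
  omega

lemma le_three_mul_ncard_of_isEdgeDominating_cycleGraph {n : ℕ} (hn : 3 ≤ n)
    {D : Set (Sym2 (Fin n))} (hD : IsEdgeDominating (cycleGraph n) D) : n ≤ 3 * D.ncard := by
  obtain ⟨m, rfl⟩ := Nat.exists_eq_add_of_le' hn
  simpa [ncard_edgeSet_cycleGraph hn] using
    hD.ncard_edgeSet_le (d := 2) fun _ => cycleGraph_degree_three_le.le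

lemma mem_edgeSet_cycleGraph {n : ℕ} {e : Sym2 (Fin (n + 2))} :
    e ∈ (cycleGraph (n + 2)).edgeSet ↔ ∃ i, s(i, i + 1) = e := by
  induction e using Sym2.ind with
  | h u v =>
    rw [mem_edgeSet, cycleGraph_adj, sub_eq_iff_eq_add, sub_eq_iff_eq_add]
    constructor
    · rintro (rfl | rfl)
      exacts [⟨v, by rw [add_comm 1 v, Sym2.eq_swap]⟩, ⟨u, by rw [add_comm 1 u]⟩]
    · rintro ⟨i, hi⟩
      rcases Sym2.eq_iff.mp hi with ⟨rfl, rfl⟩ | ⟨rfl, rfl⟩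
      exacts [Or.inr (add_comm _ _), Or.inl (add_comm _ _)]

lemma isEdgeDominating_cycleGraph_pair {n : ℕ} (k : Fin (n + 2))
    (hk : ∀ i j : Fin (n + 2),
      SharesEndpoint s(j, j + 1) s(i, i + 1) ∨ SharesEndpoint s(j, j + 1) s(i + k, i + k + 1))
    (i : Fin (n + 2)) :
    IsEdgeDominating (cycleGraph (n + 2)) {s(i, i + 1), s(i + k, i + k + 1)} := by
  refine ⟨?_, ?_⟩
  · rintro _ (rfl | rfl) <;> exact mem_edgeSet_cycleGraph.mpr ⟨_, rfl⟩
  · rintro _ ⟨he, -⟩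
    obtain ⟨j, rfl⟩ := mem_edgeSet_cycleGraph.mp he
    rcases hk i j with h | h
    exacts [⟨_, Or.inl rfl, h⟩, ⟨_, Or.inr rfl, h⟩]

-- For `n = 3` each edge dominates alone; for `4 ≤ n ≤ 6` it forms a coalition with the
-- antipodal edge, `n / 2` steps further along the cycle.
lemma isECPartition_singletons_cycleGraph {n : ℕ} (h3 : 3 ≤ n) (h6 : n ≤ 6) :
    IsECPartition (cycleGraph n) ((fun e => {e}) '' (cycleGraph n).edgeSet) := by
  refine isECPartition_singletons fun e he => ?_
  obtain ⟨m, rfl⟩ := Nat.exists_eq_add_of_le' (by omega : 2 ≤ n)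
  obtain ⟨i, rfl⟩ := mem_edgeSet_cycleGraph.mp he
  rcases (by omega : m = 1 ∨ 2 ≤ m) with rfl | hm
  · left
    simpa using isEdgeDominating_cycleGraph_pair 0
      (by simp only [sharesEndpoint_mk_right_iff, Sym2.mem_iff]; decide) i
  · right
    have hsingle : ∀ f, ¬ IsEdgeDominating (cycleGraph (m + 2)) {f} := fun f hf => by
      have := le_three_mul_ncard_of_isEdgeDominating_cycleGraph h3 hf
      rw [ncard_singleton] at this
      omega
    refine ⟨_, isEdgeCoalition_singleton_singleton hsingle
      (isEdgeDominating_cycleGraph_pair (Fin.ofNat _ ((m + 2) / 2)) ?_ i)⟩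
    simp only [sharesEndpoint_mk_right_iff, Sym2.mem_iff]
    obtain rfl | rfl | rfl : m = 2 ∨ m = 3 ∨ m = 4 := by omega
    all_goals decide

/-- For every `n ≥ 3`, `EC(C_n) = n` iff `3 ≤ n ≤ 6`; moreover `EC(C_n) < n`
for all `n ≥ 7`. -/
theorem edgeCoalitionNumber_cycleGraph_eq_iff (n : ℕ) (hn : 3 ≤ n) :
    (edgeCoalitionNumber (SimpleGraph.cycleGraph n) = n ↔ n ≤ 6) ∧
    (7 ≤ n → edgeCoalitionNumber (SimpleGraph.cycleGraph n) < n) := by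
  have hE := ncard_edgeSet_cycleGraph hn
  have hlt : 7 ≤ n → edgeCoalitionNumber (cycleGraph n) < n := fun h7 => by
    refine (edgeCoalitionNumber_lt_ncard_edgeSet (toFinite _) fun D hD => ?_).trans_eq hE
    have := le_three_mul_ncard_of_isEdgeDominating_cycleGraph hn hD
    omega
  refine ⟨⟨fun hEC => ?_, fun h6 => ?_⟩, hlt⟩
  · by_contra h6
    exact (hlt (by omega)).ne hEC
  · exact (edgeCoalitionNumber_eq_ncard_edgeSet (toFinite _)
      (isECPartition_singletons_cycleGraph hn h6)).trans hE
end

section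
/- If G is a finite connected unicyclic simple graph of order n (so G has exactly n edges) such that EC(G) = n (equivalently, the singleton partition of the edge set of G is an ec-partition), then every path in G has length at most 5. -/
open SimpleGraph

/-! If the singleton partition of the edge set is an ec-partition, every edge `e` has a partner
`f` with `{e, f}` edge dominating. Along a path `w₀ w₁ … w₆`, the partner of `w₀w₁` has to meet
each of the four edges `w₂w₃, …, w₅w₆`, which forces it to be `w₃w₅`; reading the path backwards,
`w₁w₃` is an edge as well. The triangles `w₁w₂w₃` and `w₃w₄w₅` make `w₃w₅` and then `w₁w₃`
non-bridges, so deleting both leaves a connected graph on `n` vertices with `n - 2` edges. -/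

section DisjointFamily

variable {α : Type*} {P : Set (Set α)}

lemma exists_image_sUnion_eq_of_pairwise_disjoint (hne : ∀ A ∈ P, A.Nonempty)
    (hP : P.Pairwise Disjoint) :
    ∃ g : α → Set α, (∀ A ∈ P, ∀ x ∈ A, g x = A) ∧ g '' ⋃₀ P = P := by
  choose! g hgP hg using fun x (hx : x ∈ ⋃₀ P) => Set.mem_sUnion.1 hx
  have hpart : ∀ A ∈ P, ∀ x ∈ A, g x = A := fun A hA x hx => by
    by_contra hne
    exact Set.disjoint_left.1 (hP (hgP x ⟨A, hA, hx⟩) hA hne) (hg x ⟨A, hA, hx⟩) hx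
  refine ⟨g, hpart, Set.Subset.antisymm ?_ fun A hA => ?_⟩
  · rintro _ ⟨x, hx, rfl⟩
    exact hgP x hx
  · obtain ⟨x, hx⟩ := hne A hA
    exact ⟨x, ⟨A, hA, hx⟩, hpart A hA x hx⟩

lemma ncard_le_ncard_sUnion (hne : ∀ A ∈ P, A.Nonempty) (hP : P.Pairwise Disjoint)
    (hfin : (⋃₀ P).Finite) : P.ncard ≤ (⋃₀ P).ncard := by
  obtain ⟨g, -, himage⟩ := exists_image_sUnion_eq_of_pairwise_disjoint hne hP
  calc P.ncard = (g '' ⋃₀ P).ncard := by rw [himage]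
    _ ≤ (⋃₀ P).ncard := Set.ncard_image_le hfin

lemma exists_eq_singleton_of_ncard_sUnion_le (hne : ∀ A ∈ P, A.Nonempty)
    (hP : P.Pairwise Disjoint) (hfin : (⋃₀ P).Finite) (hcard : (⋃₀ P).ncard ≤ P.ncard) :
    ∀ A ∈ P, ∃ a, A = {a} := by
  obtain ⟨g, hpart, himage⟩ := exists_image_sUnion_eq_of_pairwise_disjoint hne hP
  have hinj : Set.InjOn g (⋃₀ P) :=
    Set.injOn_of_ncard_image_eq ((Set.ncard_image_le hfin).antisymm (by rwa [himage])) hfin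
  intro A hA
  refine Set.exists_eq_singleton_iff_nonempty_subsingleton.2 ⟨hne A hA, fun x hx y hy => ?_⟩
  exact hinj ⟨A, hA, hx⟩ ⟨A, hA, hy⟩ ((hpart A hA x hx).trans (hpart A hA y hy).symm)

end DisjointFamily

section EdgeCoalition

variable {V : Type*} {G : SimpleGraph V}

lemma sharesEndpoint_self (e : Sym2 V) : SharesEndpoint e e := by
  induction e using Sym2.ind with
  | h a b => exact ⟨a, Sym2.mem_mk_left a b, Sym2.mem_mk_left a b⟩

lemma sharesEndpoint_mk_iff {a b : V} {f : Sym2 V} :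
    SharesEndpoint s(a, b) f ↔ a ∈ f ∨ b ∈ f := by
  simp [SharesEndpoint]

lemma IsEdgeDominating.exists_sharesEndpoint {D : Set (Sym2 V)} (hD : IsEdgeDominating G D)
    {e : Sym2 V} (he : e ∈ G.edgeSet) : ∃ f ∈ D, SharesEndpoint e f := by
  by_cases heD : e ∈ D
  · exact ⟨e, heD, sharesEndpoint_self e⟩
  · exact hD.2 e ⟨he, heD⟩

lemma IsECPartition.exists_eq_singleton_of_ncard_edgeSet_le [Finite V]
    {P : Set (Set (Sym2 V))} (hP : IsECPartition G P) (hcard : G.edgeSet.ncard ≤ P.ncard) :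
    ∀ A ∈ P, ∃ e, A = {e} := by
  obtain ⟨hne, hdisj, hcover, -⟩ := hP
  exact exists_eq_singleton_of_ncard_sUnion_le hne hdisj (hcover ▸ G.edgeSet.toFinite)
    (hcover ▸ hcard)

lemma IsECPartition.exists_pair_isEdgeDominating {P : Set (Set (Sym2 V))}
    (hP : IsECPartition G P) (hsingle : ∀ A ∈ P, ∃ e, A = {e}) {e : Sym2 V}
    (he : e ∈ G.edgeSet) : ∃ f, IsEdgeDominating G {e, f} := by
  obtain ⟨A, hA, heA⟩ := hP.2.2.1 ▸ he
  obtain ⟨a, rfl⟩ := hsingle A hA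
  obtain rfl := Set.mem_singleton_iff.1 heA
  rcases hP.2.2.2 _ hA with ⟨-, hdom⟩ | ⟨-, B, hB, -, hcoal⟩
  · exact ⟨e, by rwa [Set.pair_eq_singleton]⟩
  · obtain ⟨f, rfl⟩ := hsingle B hB
    exact ⟨f, hcoal.2.2.2⟩

lemma exists_isECPartition_ncard_eq_edgeCoalitionNumber [Finite V]
    (hpos : 0 < edgeCoalitionNumber G) :
    ∃ P, IsECPartition G P ∧ P.ncard = edgeCoalitionNumber G := by
  refine (Nat.sSup_mem (Set.nonempty_iff_ne_empty.2 fun hempty => ?_) ⟨G.edgeSet.ncard, ?_⟩ :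
    edgeCoalitionNumber G ∈ {k | ∃ P, IsECPartition G P ∧ P.ncard = k})
  · simp [edgeCoalitionNumber, hempty] at hpos
  rintro _ ⟨P, ⟨hne, hdisj, hcover, -⟩, rfl⟩
  exact hcover ▸ ncard_le_ncard_sUnion hne hdisj (hcover ▸ G.edgeSet.toFinite)

lemma exists_pair_isEdgeDominating_of_edgeCoalitionNumber_eq [Finite V]
    (hEC : edgeCoalitionNumber G = G.edgeSet.ncard) {e : Sym2 V} (he : e ∈ G.edgeSet) :
    ∃ f, IsEdgeDominating G {e, f} := by
  have hpos : 0 < edgeCoalitionNumber G :=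
    hEC ▸ (Set.ncard_pos G.edgeSet.toFinite).2 ⟨e, he⟩
  obtain ⟨P, hP, hcard⟩ := exists_isECPartition_ncard_eq_edgeCoalitionNumber hpos
  exact hP.exists_pair_isEdgeDominating
    (hP.exists_eq_singleton_of_ncard_edgeSet_le (hcard.trans hEC).ge) he

end EdgeCoalition

lemma eq_mk_of_covers_path_of_length_four {V : Type*} {a b c d e : V} {f : Sym2 V}
    (hnodup : [a, b, c, d, e].Nodup) (hab : a ∈ f ∨ b ∈ f) (hbc : b ∈ f ∨ c ∈ f)
    (hcd : c ∈ f ∨ d ∈ f) (hde : d ∈ f ∨ e ∈ f) : f = s(b, d) := by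
  induction f using Sym2.ind with
  | h x y =>
    simp only [List.nodup_cons, List.mem_cons, List.not_mem_nil, List.nodup_nil, Sym2.mem_iff,
      Sym2.eq_iff] at *
    grind

namespace SimpleGraph

lemma Walk.IsPath.exists_injective_fin {V : Type*} {G : SimpleGraph V} {u v : V}
    {p : G.Walk u v} (hp : p.IsPath) {n : ℕ} (hn : n ≤ p.length) :
    ∃ w : Fin (n + 1) → V, Function.Injective w ∧ ∀ i : Fin n, G.Adj (w i.castSucc) (w i.succ) := by
  refine ⟨fun i => p.getVert i, fun i j hij => Fin.ext ?_, fun i => ?_⟩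
  · exact hp.getVert_injOn (by simp; omega) (by simp; omega) hij
  · exact p.adj_getVert_succ (lt_of_lt_of_le i.isLt hn)

end SimpleGraph

section PathOfLengthSix

variable {V : Type*} {G : SimpleGraph V} {w : Fin 7 → V}

lemma eq_mk_of_isEdgeDominating_pair (hw : Function.Injective w)
    (hadj : ∀ i : Fin 6, G.Adj (w i.castSucc) (w i.succ)) {f : Sym2 V}
    (hD : IsEdgeDominating G {s(w 0, w 1), f}) : f = s(w 3, w 5) := by
  have hcover : ∀ i : Fin 6, 2 ≤ i → w i.castSucc ∈ f ∨ w i.succ ∈ f := by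
    intro i hi
    obtain ⟨g, hg, hshare⟩ := hD.exists_sharesEndpoint (G.mem_edgeSet.2 (hadj i))
    rcases hg with rfl | rfl
    · simp only [sharesEndpoint_mk_iff, Sym2.mem_iff, hw.eq_iff] at hshare
      fin_cases i <;> simp at hi hshare
    · exact sharesEndpoint_mk_iff.1 hshare
  exact eq_mk_of_covers_path_of_length_four (by simp [hw.eq_iff])
    (hcover 2 (by decide)) (hcover 3 (by decide)) (hcover 4 (by decide)) (hcover 5 (by decide))

lemma adj_three_five_of_forall_exists_pair_isEdgeDominating (hw : Function.Injective w)
    (hadj : ∀ i : Fin 6, G.Adj (w i.castSucc) (w i.succ))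
    (hdom : ∀ e ∈ G.edgeSet, ∃ f, IsEdgeDominating G {e, f}) : G.Adj (w 3) (w 5) := by
  obtain ⟨f, hD⟩ := hdom _ (G.mem_edgeSet.2 (hadj 0))
  have hf : f ∈ G.edgeSet := hD.1 (Set.mem_insert_of_mem _ rfl)
  rwa [eq_mk_of_isEdgeDominating_pair hw hadj hD] at hf

end PathOfLengthSix

namespace SimpleGraph

variable {V : Type*} {G : SimpleGraph V} {a b c : V}

lemma not_isBridge_of_adj_of_adj (hab : G.Adj a b) (hbc : G.Adj b c) : ¬ G.IsBridge s(a, c) := by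
  rw [isBridge_iff, not_not]
  have hab' : (G.deleteEdges {s(a, c)}).Adj a b := by simp [hab, hab.ne', hbc.ne]
  have hbc' : (G.deleteEdges {s(a, c)}).Adj b c := by simp [hbc, hab.ne', hbc.ne]
  exact hab'.reachable.trans hbc'.reachable

lemma Connected.card_le_ncard_edgeSet_of_not_isBridge [Finite V] (hG : G.Connected)
    (hac : G.Adj a c) (hbridge : ¬ G.IsBridge s(a, c)) : Nat.card V ≤ G.edgeSet.ncard := by
  have h := (hG.connected_delete_edge_of_not_isBridge hbridge).card_vert_le_card_edgeSet_add_one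
  rw [Nat.card_coe_set_eq, edgeSet_deleteEdges,
    Set.ncard_sdiff_singleton_of_mem (G.mem_edgeSet.2 hac)] at h
  have hpos := (Set.ncard_pos G.edgeSet.toFinite).2 ⟨_, G.mem_edgeSet.2 hac⟩
  omega

lemma Connected.card_lt_ncard_edgeSet_of_two_triangles [Finite V] {d e : V} (hG : G.Connected)
    (hab : G.Adj a b) (hbc : G.Adj b c) (hac : G.Adj a c) (hcd : G.Adj c d) (hde : G.Adj d e)
    (hce : G.Adj c e) (hae : a ≠ e) (hbe : b ≠ e) : Nat.card V < G.edgeSet.ncard := by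
  have hH := hG.connected_delete_edge_of_not_isBridge (not_isBridge_of_adj_of_adj hcd hde)
  have hab' : (G.deleteEdges {s(c, e)}).Adj a b := by simp [hab, hac.ne, hbc.ne]
  have hbc' : (G.deleteEdges {s(c, e)}).Adj b c := by simp [hbc, hbe, hce.ne]
  have hac' : (G.deleteEdges {s(c, e)}).Adj a c := by simp [hac, hae, hce.ne]
  have h := hH.card_le_ncard_edgeSet_of_not_isBridge hac' (not_isBridge_of_adj_of_adj hab' hbc')
  rw [edgeSet_deleteEdges, Set.ncard_sdiff_singleton_of_mem (G.mem_edgeSet.2 hce)] at h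
  have hpos := (Set.ncard_pos G.edgeSet.toFinite).2 ⟨_, G.mem_edgeSet.2 hce⟩
  omega

end SimpleGraph

/-- If `G` is a finite connected unicyclic simple graph of order `n` (so `G`
has exactly `n` edges) with `EC(G) = n`, then every path in `G` has length at
most 5. -/
theorem unicyclic_path_length_le_of_ec_eq_size {V : Type*} [Fintype V]
    (G : SimpleGraph V) (hconn : G.Connected)
    (hm : G.edgeSet.ncard = Fintype.card V)
    (hec : edgeCoalitionNumber G = Fintype.card V) :
    ∀ (u v : V) (p : G.Walk u v), p.IsPath → p.length ≤ 5 := by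
  intro u v p hp
  by_contra! hlen
  obtain ⟨w, hw, hadj⟩ := hp.exists_injective_fin (n := 6) hlen
  have hdom : ∀ e ∈ G.edgeSet, ∃ f, IsEdgeDominating G {e, f} := fun e he =>
    exists_pair_isEdgeDominating_of_edgeCoalitionNumber_eq (hec.trans hm.symm) he
  have h35 : G.Adj (w 3) (w 5) :=
    adj_three_five_of_forall_exists_pair_isEdgeDominating hw hadj hdom
  have h13 : G.Adj (w 1) (w 3) := by
    have hadj_rev : ∀ i : Fin 6, G.Adj (w i.castSucc.rev) (w i.succ.rev) := fun i => by
      simpa only [Fin.rev_castSucc, Fin.rev_succ] using (hadj i.rev).symm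
    simpa using (adj_three_five_of_forall_exists_pair_isEdgeDominating
      (hw.comp Fin.rev_injective) hadj_rev hdom).symm
  have := hconn.card_lt_ncard_edgeSet_of_two_triangles (hadj 1) (hadj 2) h13 (hadj 3) (hadj 4) h35
    (by simp [hw.eq_iff]) (by simp [hw.eq_iff])
  rw [hm, Nat.card_eq_fintype_card] at this
  exact this.false
end
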